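/- Let ⊕ be the drastic T-conorm T_d' (T_d'(x,y) = max(x,y) if min(x,y) = 0, else 1) and ⊗ a conjunctive uninorm (0 ⊗ 1 = 0). Then for all 0 ≤ x₁ ≤ x₂ ≤ 1 and 0 ≤ y₁ ≤ y₂ ≤ 1: (x₁⊕y₁) ⊗ (x₂⊕y₂) ≤ (x₁⊕y₂) ⊗ (x₂⊕y₁). -/

import Mathlib

open Set

def IsUninorm (f : ℝ → ℝ → ℝ) : Prop :=
  (∀ x ∈ Icc (0:ℝ) 1, ∀ y ∈ Icc (0:ℝ) 1, f x y ∈ Icc (0:ℝ) 1) ∧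
  (∀ x ∈ Icc (0:ℝ) 1, ∀ y ∈ Icc (0:ℝ) 1, f x y = f y x) ∧
  (∀ x ∈ Icc (0:ℝ) 1, ∀ y ∈ Icc (0:ℝ) 1, ∀ z ∈ Icc (0:ℝ) 1, f (f x y) z = f x (f y z)) ∧
  (∀ x ∈ Icc (0:ℝ) 1, ∀ y ∈ Icc (0:ℝ) 1, ∀ z ∈ Icc (0:ℝ) 1, x ≤ y → f x z ≤ f y z) ∧
  (∃ e ∈ Icc (0:ℝ) 1, ∀ x ∈ Icc (0:ℝ) 1, f x e = x)

noncomputable def Td' (x y : ℝ) : ℝ := if min x y = 0 then max x y else 1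

/-! Since `Td'` is `1` as soon as both arguments are positive, enlarging a point `(x₁, y₁) ≠ (0, 0)`
to `(x₂, y₂)` coordinatewise gives the same value of `Td'` as enlarging only one of its coordinates.
So `Td' x₂ y₂` equals one of the mixed values `Td' x₁ y₂`, `Td' x₂ y₁`, while `Td' x₁ y₁` lies below
both of them, and monotonicity and commutativity of the uninorm give the inequality. At
`(x₁, y₁) = (0, 0)` the left-hand side is `0 ⊗ _ = 0` by conjunctivity. -/

namespace IsUninorm

variable {f : ℝ → ℝ → ℝ} {x y z : ℝ}

theorem mem_Icc (h : IsUninorm f) (hx : x ∈ Icc (0:ℝ) 1) (hy : y ∈ Icc (0:ℝ) 1) :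
    f x y ∈ Icc (0:ℝ) 1 :=
  h.1 x hx y hy

theorem comm (h : IsUninorm f) (hx : x ∈ Icc (0:ℝ) 1) (hy : y ∈ Icc (0:ℝ) 1) : f x y = f y x :=
  h.2.1 x hx y hy

theorem mono_left (h : IsUninorm f) (hx : x ∈ Icc (0:ℝ) 1) (hy : y ∈ Icc (0:ℝ) 1)
    (hz : z ∈ Icc (0:ℝ) 1) (hxy : x ≤ y) : f x z ≤ f y z :=
  h.2.2.2.1 x hx y hy z hz hxy

theorem mono_right (h : IsUninorm f) (hx : x ∈ Icc (0:ℝ) 1) (hy : y ∈ Icc (0:ℝ) 1)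
    (hz : z ∈ Icc (0:ℝ) 1) (hyz : y ≤ z) : f x y ≤ f x z := by
  rw [h.comm hx hy, h.comm hx hz]
  exact h.mono_left hy hz hx hyz

theorem zero_left_of_conjunctive (h : IsUninorm f) (hconj : f 0 1 = 0) (hx : x ∈ Icc (0:ℝ) 1) :
    f 0 x = 0 := by
  have h0 : (0:ℝ) ∈ Icc (0:ℝ) 1 := left_mem_Icc.2 zero_le_one
  have h1 : (1:ℝ) ∈ Icc (0:ℝ) 1 := right_mem_Icc.2 zero_le_one
  refine le_antisymm ?_ (h.mem_Icc h0 hx).1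
  calc f 0 x ≤ f 0 1 := h.mono_right h0 hx h1 hx.2
    _ = 0 := hconj

end IsUninorm

section Drastic

variable {x y x₁ x₂ y₁ y₂ : ℝ}

theorem Td'_comm (x y : ℝ) : Td' x y = Td' y x := by
  simp only [Td', min_comm, max_comm]

theorem Td'_zero_left (hy : 0 ≤ y) : Td' 0 y = y := by
  simp [Td', hy]

theorem Td'_zero_right (hx : 0 ≤ x) : Td' x 0 = x := by
  simp [Td', hx]

theorem Td'_of_pos (hx : 0 < x) (hy : 0 < y) : Td' x y = 1 := by
  simp [Td', (lt_min hx hy).ne']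

theorem Td'_mem_Icc (hx : x ∈ Icc (0:ℝ) 1) (hy : y ∈ Icc (0:ℝ) 1) : Td' x y ∈ Icc (0:ℝ) 1 := by
  unfold Td'
  split_ifs
  exacts [⟨le_max_of_le_left hx.1, max_le hx.2 hy.2⟩, right_mem_Icc.2 zero_le_one]

theorem le_Td'_left (hx : x ≤ 1) : x ≤ Td' x y := by
  unfold Td'
  split_ifs
  exacts [le_max_left x y, hx]

theorem Td'_mono_right (hx : x ∈ Icc (0:ℝ) 1) (hy : 0 ≤ y) (hyy : y ≤ y₂) : Td' x y ≤ Td' x y₂ := by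
  rcases hy.eq_or_lt with rfl | hy
  · exact (Td'_zero_right hx.1).trans_le (le_Td'_left hx.2)
  rcases hx.1.eq_or_lt with rfl | hx
  · rwa [Td'_zero_left hy.le, Td'_zero_left (hy.le.trans hyy)]
  · rw [Td'_of_pos hx hy, Td'_of_pos hx (hy.trans_le hyy)]

theorem Td'_mono_left (hy : y ∈ Icc (0:ℝ) 1) (hx : 0 ≤ x) (hxx : x ≤ x₂) : Td' x y ≤ Td' x₂ y := by
  rw [Td'_comm x, Td'_comm x₂]
  exact Td'_mono_right hy hx hxx

theorem Td'_eq_or_eq_of_pos_or_pos (hx₁ : 0 ≤ x₁) (hy₁ : 0 ≤ y₁) (hpos : 0 < x₁ ∨ 0 < y₁)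
    (hx : x₁ ≤ x₂) (hy : y₁ ≤ y₂) : Td' x₂ y₂ = Td' x₁ y₂ ∨ Td' x₂ y₂ = Td' x₂ y₁ := by
  rcases hx.eq_or_lt with rfl | hx
  · exact Or.inl rfl
  rcases hy.eq_or_lt with rfl | hy
  · exact Or.inr rfl
  have hx₂ : 0 < x₂ := hx₁.trans_lt hx
  have hy₂ : 0 < y₂ := hy₁.trans_lt hy
  rw [Td'_of_pos hx₂ hy₂]
  rcases hpos with hx₁ | hy₁
  · exact Or.inl (Td'_of_pos hx₁ hy₂).symm
  · exact Or.inr (Td'_of_pos hx₂ hy₁).symm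

end Drastic

theorem drastic_tconorm_with_conjunctive_uninorm (ot : ℝ → ℝ → ℝ)
    (hot : IsUninorm ot) (hconj : ot 0 1 = 0) :
    ∀ x₁ x₂ y₁ y₂ : ℝ, 0 ≤ x₁ → x₁ ≤ x₂ → x₂ ≤ 1 → 0 ≤ y₁ → y₁ ≤ y₂ → y₂ ≤ 1 →
      ot (Td' x₁ y₁) (Td' x₂ y₂) ≤ ot (Td' x₁ y₂) (Td' x₂ y₁) := by
  intro x₁ x₂ y₁ y₂ hx₁ hx hx₂ hy₁ hy hy₂
  have hx₁' : x₁ ∈ Icc (0:ℝ) 1 := ⟨hx₁, hx.trans hx₂⟩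
  have hx₂' : x₂ ∈ Icc (0:ℝ) 1 := ⟨hx₁.trans hx, hx₂⟩
  have hy₁' : y₁ ∈ Icc (0:ℝ) 1 := ⟨hy₁, hy.trans hy₂⟩
  have hy₂' : y₂ ∈ Icc (0:ℝ) 1 := ⟨hy₁.trans hy, hy₂⟩
  have ha := Td'_mem_Icc hx₁' hy₁'
  have hb := Td'_mem_Icc hx₂' hy₂'
  have hc := Td'_mem_Icc hx₁' hy₂'
  have hd := Td'_mem_Icc hx₂' hy₁'
  by_cases hzero : x₁ = 0 ∧ y₁ = 0
  · obtain ⟨rfl, rfl⟩ := hzero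
    rw [Td'_zero_left le_rfl, hot.zero_left_of_conjunctive hconj hb]
    exact (hot.mem_Icc hc hd).1
  have hpos : 0 < x₁ ∨ 0 < y₁ := by
    rw [not_and_or] at hzero
    exact hzero.imp hx₁.lt_of_ne' hy₁.lt_of_ne'
  rcases Td'_eq_or_eq_of_pos_or_pos hx₁ hy₁ hpos hx hy with hbc | hbd
  · rw [hbc, hot.comm ha hc]
    exact hot.mono_right hc ha hd (Td'_mono_left hy₁' hx₁ hx)
  · rw [hbd]
    exact hot.mono_left ha hc hd (Td'_mono_right hx₁' hy₁ hy)
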